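/- arXiv:2010.15639 — 4 statements merged into one kernel-verified Lean document; each statement's English description precedes it below -/
import Mathlib

section
/- For positive reals α⁺, α⁻, and densities p⁺, g, p⁻ ≥ 0 (not all zero) at a point, the function D ↦ -(α⁺·p⁺·log D + g·log(1−D) + α⁻·p⁻·log(1−D)) on (0,1) is uniquely minimized at D* = α⁺p⁺ / (α⁺p⁺ + g + α⁻p⁻). -/
open Real Set

/-!
With `a = α⁺p⁺` and `b = g + α⁻p⁻` the objective is `-(a log D + b log (1 - D))`. Applying
`log t < t - 1` (strict for `t ≠ 1`) at `t = D / D*` and at `t = (1 - D) / (1 - D*)`, weighted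
by `a` and `b`, gives two linear bounds whose sum is `(a + b)(D + (1 - D)) - a - b = 0`.
-/

theorem div_add_mem_Ioo {a b : ℝ} (ha : 0 < a) (hb : 0 < b) : a / (a + b) ∈ Ioo (0 : ℝ) 1 :=
  ⟨div_pos ha (add_pos ha hb), (div_lt_one (add_pos ha hb)).2 (lt_add_of_pos_right a hb)⟩

theorem mul_log_sub_mul_log_div_lt {c s x : ℝ} (hc : 0 < c) (hs : 0 < s) (hx : 0 < x)
    (hne : x ≠ c / s) : c * log x - c * log (c / s) < s * x - c := by
  have hcs : 0 < c / s := div_pos hc hs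
  have hlog : log (x / (c / s)) < x / (c / s) - 1 :=
    log_lt_sub_one_of_pos (div_pos hx hcs) (by rwa [Ne, div_eq_one_iff_eq hcs.ne'])
  rw [log_div hx.ne' hcs.ne'] at hlog
  calc c * log x - c * log (c / s) = c * (log x - log (c / s)) := by ring
    _ < c * (x / (c / s) - 1) := mul_lt_mul_of_pos_left hlog hc
    _ = s * x - c := by field_simp

theorem mul_log_add_mul_log_one_sub_lt {a b D : ℝ} (ha : 0 < a) (hb : 0 < b)
    (hD : D ∈ Ioo (0 : ℝ) 1) (hne : D ≠ a / (a + b)) :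
    a * log D + b * log (1 - D) < a * log (a / (a + b)) + b * log (1 - a / (a + b)) := by
  have hab : 0 < a + b := add_pos ha hb
  have hcompl : 1 - a / (a + b) = b / (a + b) := by field_simp; ring
  have hne' : 1 - D ≠ b / (a + b) := by
    rw [← hcompl]; intro h; exact hne (by linarith)
  have h₁ := mul_log_sub_mul_log_div_lt ha hab hD.1 hne
  have h₂ := mul_log_sub_mul_log_div_lt hb hab (sub_pos.2 hD.2) hne'
  rw [hcompl]
  linarith

theorem stmt_1_general (ap am pp g pm : ℝ)
    (hnum : 0 < ap * pp) (hden : 0 < g + am * pm)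
    (f : ℝ → ℝ)
    (hf : ∀ D, f D = -(ap * pp * Real.log D + g * Real.log (1 - D) + am * pm * Real.log (1 - D))) :
    ap * pp / (ap * pp + g + am * pm) ∈ Set.Ioo (0 : ℝ) 1 ∧
      ∀ D ∈ Set.Ioo (0 : ℝ) 1, D ≠ ap * pp / (ap * pp + g + am * pm) →
        f (ap * pp / (ap * pp + g + am * pm)) < f D := by
  have hf' : ∀ D, f D = -(ap * pp * log D + (g + am * pm) * log (1 - D)) := fun D => by
    rw [hf]; ring
  rw [add_assoc]
  refine ⟨div_add_mem_Ioo hnum hden, fun D hD hne => ?_⟩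
  rw [hf', hf', neg_lt_neg_iff]
  exact mul_log_add_mul_log_one_sub_lt hnum hden hD hne

theorem stmt_1 (ap am pp g pm : ℝ) (hap : 0 < ap) (ham : 0 < am)
    (hpp : 0 ≤ pp) (hg : 0 ≤ g) (hpm : 0 ≤ pm)
    (hnum : 0 < ap * pp) (hden : 0 < g + am * pm)
    (f : ℝ → ℝ)
    (hf : ∀ D, f D = -(ap * pp * Real.log D + g * Real.log (1 - D) + am * pm * Real.log (1 - D))) :
    ap * pp / (ap * pp + g + am * pm) ∈ Set.Ioo (0 : ℝ) 1 ∧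
      ∀ D ∈ Set.Ioo (0 : ℝ) 1, D ≠ ap * pp / (ap * pp + g + am * pm) →
        f (ap * pp / (ap * pp + g + am * pm)) < f D :=
  stmt_1_general ap am pp g pm hnum hden f hf
end

section
/- For fixed p_d, p_g ≥ 0 with p_d + p_g > 0 and real labels a, b, the quadratic D ↦ p_d(D−b)² + p_g(D−a)² is uniquely minimized by D* = (b·p_d + a·p_g)/(p_d + p_g), and for c with 2c = a + b, the generator loss p_d(D*−c)² + p_g(D*−c)² equals ((b−a)²/4)·(p_d − p_g)²/(p_d + p_g). -/
theorem stmt_9 (pd pg a b c : ℝ) (hpd : 0 ≤ pd) (hpg : 0 ≤ pg)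
    (hden : 0 < pd + pg) (hc : 2 * c = a + b)
    (Dstar : ℝ) (hD : Dstar = (b * pd + a * pg) / (pd + pg)) :
    (∀ D : ℝ, D ≠ Dstar →
        pd * (Dstar - b) ^ 2 + pg * (Dstar - a) ^ 2 < pd * (D - b) ^ 2 + pg * (D - a) ^ 2) ∧
      pd * (Dstar - c) ^ 2 + pg * (Dstar - c) ^ 2 =
        ((b - a) ^ 2 / 4) * (pd - pg) ^ 2 / (pd + pg) := by
  have hne : pd + pg ≠ 0 := ne_of_gt hden
  constructor
  · intro D hDne
    have hsub : D - Dstar ≠ 0 := sub_ne_zero.mpr hDne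
    have hpos : 0 < (D - Dstar) ^ 2 := by positivity
    have key : pd * (D - b) ^ 2 + pg * (D - a) ^ 2
        - (pd * (Dstar - b) ^ 2 + pg * (Dstar - a) ^ 2)
        = (pd + pg) * (D - Dstar) ^ 2 := by
      subst hD
      field_simp
      ring
    nlinarith [mul_pos hden hpos]
  · subst hD
    have hcc : c = (a + b) / 2 := by linarith
    subst hcc
    field_simp
    ring
end

section
/- Let a, b, c be reals with 2c = a + b and b ≠ a, and let p_d, p_g be probability densities on ℝⁿ with p_d + p_g > 0 a.e. Then ∫ (p_d(D*−c)² + p_g(D*−c)²) dx = ((b−a)²/4) ∫ (2p_g − (p_d + p_g))² / (p_d + p_g) dx, where D* = (b·p_d + a·p_g)/(p_d + p_g). This integral is nonnegative and equals 0 iff p_g = p_d a.e. -/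
/-! Since `c` is the midpoint of `a` and `b`, `D* - c = (b - a)(p_d - p_g) / (2 (p_d + p_g))`, so the
loss integrand at each point is `(b - a)² / 4 · (p_d - p_g)² / (p_d + p_g)`, and `p_d - p_g` is
`-(2 p_g - (p_d + p_g))`. The Pearson integrand is nonnegative, so its integral vanishes iff it
vanishes a.e., which happens exactly where `p_g = p_d`. -/

open MeasureTheory

theorem lsgan_value_eq_pearson {p q a b c : ℝ} (hc : 2 * c = a + b) (hpq : p + q ≠ 0) :
    p * ((b * p + a * q) / (p + q) - c) ^ 2 + q * ((b * p + a * q) / (p + q) - c) ^ 2 =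
      (b - a) ^ 2 / 4 * ((2 * q - (p + q)) ^ 2 / (p + q)) := by
  obtain rfl : c = (a + b) / 2 := by linarith
  field_simp
  ring

theorem pearson_integrand_eq_zero_iff {p q : ℝ} (hpq : 0 < p + q) :
    (2 * q - (p + q)) ^ 2 / (p + q) = 0 ↔ q = p := by
  rw [div_eq_zero_iff, or_iff_left hpq.ne', sq_eq_zero_iff]
  constructor <;> intro h <;> linarith

section

variable {α : Type*} [MeasurableSpace α] {μ : Measure α} {p q : α → ℝ}

theorem integral_lsgan_value_eq_pearson {a b c : ℝ} (hc : 2 * c = a + b)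
    (hpos : ∀ᵐ x ∂μ, 0 < p x + q x) :
    ∫ x, (p x * ((b * p x + a * q x) / (p x + q x) - c) ^ 2 +
        q x * ((b * p x + a * q x) / (p x + q x) - c) ^ 2) ∂μ =
      (b - a) ^ 2 / 4 * ∫ x, (2 * q x - (p x + q x)) ^ 2 / (p x + q x) ∂μ := by
  rw [← integral_const_mul]
  exact integral_congr_ae (hpos.mono fun x hx => lsgan_value_eq_pearson hc hx.ne')

theorem pearson_integrand_nonneg_ae (hpos : ∀ᵐ x ∂μ, 0 < p x + q x) :
    ∀ᵐ x ∂μ, 0 ≤ (2 * q x - (p x + q x)) ^ 2 / (p x + q x) :=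
  hpos.mono fun _ hx => div_nonneg (sq_nonneg _) hx.le

theorem integral_pearson_eq_zero_iff (hpos : ∀ᵐ x ∂μ, 0 < p x + q x)
    (hint : Integrable (fun x => (2 * q x - (p x + q x)) ^ 2 / (p x + q x)) μ) :
    ∫ x, (2 * q x - (p x + q x)) ^ 2 / (p x + q x) ∂μ = 0 ↔ q =ᵐ[μ] p := by
  rw [integral_eq_zero_iff_of_nonneg_ae (pearson_integrand_nonneg_ae hpos) hint]
  exact Filter.eventually_congr (hpos.mono fun _ hx => pearson_integrand_eq_zero_iff hx)

end

theorem stmt_10_general {n : ℕ} (pd pg : (Fin n → ℝ) → ℝ) (a b c : ℝ)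
    (hc : 2 * c = a + b)
    (hpos : ∀ᵐ x ∂volume, 0 < pd x + pg x)
    (hint : Integrable (fun x => (2 * pg x - (pd x + pg x)) ^ 2 / (pd x + pg x)) volume)
    (Dstar : (Fin n → ℝ) → ℝ)
    (hD : ∀ x, Dstar x = (b * pd x + a * pg x) / (pd x + pg x)) :
    (∫ x, (pd x * (Dstar x - c) ^ 2 + pg x * (Dstar x - c) ^ 2)) =
        ((b - a) ^ 2 / 4) * ∫ x, (2 * pg x - (pd x + pg x)) ^ 2 / (pd x + pg x) ∧
      0 ≤ ∫ x, (2 * pg x - (pd x + pg x)) ^ 2 / (pd x + pg x) ∧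
      ((∫ x, (2 * pg x - (pd x + pg x)) ^ 2 / (pd x + pg x)) = 0 ↔ pg =ᵐ[volume] pd) := by
  simp only [hD]
  exact ⟨integral_lsgan_value_eq_pearson hc hpos,
    integral_nonneg_of_ae (pearson_integrand_nonneg_ae hpos),
    integral_pearson_eq_zero_iff hpos hint⟩

theorem stmt_10 {n : ℕ} (pd pg : (Fin n → ℝ) → ℝ) (a b c : ℝ)
    (hc : 2 * c = a + b) (hab : b ≠ a)
    (hpd0 : ∀ x, 0 ≤ pd x) (hpg0 : ∀ x, 0 ≤ pg x)
    (hpdm : Measurable pd) (hpgm : Measurable pg)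
    (hpdi : Integrable pd volume) (hpgi : Integrable pg volume)
    (hpd1 : ∫ x, pd x = 1) (hpg1 : ∫ x, pg x = 1)
    (hpos : ∀ᵐ x ∂volume, 0 < pd x + pg x)
    (hint : Integrable (fun x => (2 * pg x - (pd x + pg x)) ^ 2 / (pd x + pg x)) volume)
    (Dstar : (Fin n → ℝ) → ℝ)
    (hD : ∀ x, Dstar x = (b * pd x + a * pg x) / (pd x + pg x)) :
    (∫ x, (pd x * (Dstar x - c) ^ 2 + pg x * (Dstar x - c) ^ 2)) =
        ((b - a) ^ 2 / 4) * ∫ x, (2 * pg x - (pd x + pg x)) ^ 2 / (pd x + pg x) ∧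
      0 ≤ ∫ x, (2 * pg x - (pd x + pg x)) ^ 2 / (pd x + pg x) ∧
      ((∫ x, (2 * pg x - (pd x + pg x)) ^ 2 / (pd x + pg x)) = 0 ↔ pg =ᵐ[volume] pd) :=
  stmt_10_general pd pg a b c hc hpos hint Dstar hD
end

section
/- For the Pearson-χ² f-GAN with f^c(T) = T²/4 + T and identity activation, the pointwise optimality condition ∂f^c/∂T = (γ⁺p⁺ − γ⁻p⁻)/g gives T* = 2((γ⁺p⁺ − γ⁻p⁻ − g)/g), and the condition f^c(T*) = λ implies g = (γ⁺p⁺ − γ⁻p⁻)/√(λ+1), assuming λ > −1 and γ⁺p⁺ − γ⁻p⁻ > 0. -/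
/-!
Put `r = (γ⁺p⁺ − γ⁻p⁻)/g`. Since `(f^c)'(T) = T/2 + 1`, the stationary point is `T* = 2(r − 1)`,
and there `f^c(T*) = r² − 1`. Hence `f^c(T*) = λ` gives `r = √(λ + 1)` because `r > 0`,
i.e. `g = (γ⁺p⁺ − γ⁻p⁻)/√(λ + 1)`.
-/

open Real

lemma hasDerivAt_sq_div_four_add_self (T : ℝ) :
    HasDerivAt (fun T : ℝ => T ^ 2 / 4 + T) (T / 2 + 1) T := by
  have h : HasDerivAt (fun T : ℝ => T ^ 2 / 4 + T) (2 * T ^ 1 / 4 + 1) T :=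
    ((hasDerivAt_pow 2 T).div_const 4).add (hasDerivAt_id T)
  convert h using 1
  ring

lemma sq_div_four_add_self_two_mul_sub_one (r : ℝ) :
    (2 * (r - 1)) ^ 2 / 4 + 2 * (r - 1) = r ^ 2 - 1 := by
  ring

lemma eq_sqrt_add_one_of_sq_sub_one_eq {r lam : ℝ} (hr : 0 ≤ r) (h : r ^ 2 - 1 = lam) :
    r = √(lam + 1) := by
  rw [← h, sub_add_cancel, sqrt_sq hr]

theorem stmt_13_general (gp gm pp pm g lam : ℝ) (hnum : 0 < gp * pp - gm * pm) (hg : 0 < g)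
    (Tstar : ℝ) (hT : Tstar = 2 * ((gp * pp - gm * pm - g) / g)) :
    HasDerivAt (fun T : ℝ => T ^ 2 / 4 + T) ((gp * pp - gm * pm) / g) Tstar ∧
      (Tstar ^ 2 / 4 + Tstar = lam → g = (gp * pp - gm * pm) / Real.sqrt (lam + 1)) := by
  set r := (gp * pp - gm * pm) / g with hr
  have hT' : Tstar = 2 * (r - 1) := by rw [hT, hr, sub_div, div_self hg.ne']
  subst hT'
  refine ⟨(hasDerivAt_sq_div_four_add_self _).congr_deriv (by ring), fun hlam => ?_⟩
  rw [sq_div_four_add_self_two_mul_sub_one] at hlam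
  rw [← eq_sqrt_add_one_of_sq_sub_one_eq (div_pos hnum hg).le hlam,
    div_div_cancel₀ hnum.ne']

theorem stmt_13 (gp gm pp pm g lam : ℝ) (hnum : 0 < gp * pp - gm * pm) (hg : 0 < g)
    (hlam : -1 < lam)
    (Tstar : ℝ) (hT : Tstar = 2 * ((gp * pp - gm * pm - g) / g)) :
    HasDerivAt (fun T : ℝ => T ^ 2 / 4 + T) ((gp * pp - gm * pm) / g) Tstar ∧
      (Tstar ^ 2 / 4 + Tstar = lam → g = (gp * pp - gm * pm) / Real.sqrt (lam + 1)) :=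
  stmt_13_general gp gm pp pm g lam hnum hg Tstar hT
end
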